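/- arXiv:2410.15762 — 3 statements merged into one kernel-verified Lean document; each statement's English description precedes it below -/
import Mathlib

section
/- Let Ŵ be a minimizer of W ↦ ‖ΦY − WX‖_F² over ℝ^{m×d} and Ẑ a minimizer of Z ↦ ‖Y − ZX‖_F² over ℝ^{K×d}. If the m×K matrix Φ' := Φ·U is (1,δ)-RIP, where U is the left orthogonal factor in a singular value decomposition Y − ẐX = U Σ Vᵀ, then ‖ΦY − ŴX‖_F² ≤ (1+δ)·‖Y − ẐX‖_F². -/
open Matrix BigOperators

noncomputable def sqNorm {ι : Type*} [Fintype ι] (v : ι → ℝ) : ℝ := ∑ i, v i ^ 2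

noncomputable def norm2 {ι : Type*} [Fintype ι] (v : ι → ℝ) : ℝ := Real.sqrt (sqNorm v)

noncomputable def sqFrob {ι κ : Type*} [Fintype ι] [Fintype κ] (A : Matrix ι κ ℝ) : ℝ :=
  ∑ i, ∑ j, A i j ^ 2

def Sparse {K : ℕ} (s : ℕ) (v : Fin K → ℝ) : Prop := Nat.card {i // v i ≠ 0} ≤ s

def RIP {m K : ℕ} (s : ℕ) (δ : ℝ) (Φ : Matrix (Fin m) (Fin K) ℝ) : Prop :=
  ∀ v : Fin K → ℝ, Sparse s v →
    (1 - δ) * sqNorm v ≤ sqNorm (Φ.mulVec v) ∧ sqNorm (Φ.mulVec v) ≤ (1 + δ) * sqNorm v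
lemma sqFrob_eq_trace {ι κ : Type*} [Fintype ι] [Fintype κ] [DecidableEq ι]
    (A : Matrix ι κ ℝ) : sqFrob A = (A * A.transpose).trace := by
  simp [sqFrob, Matrix.trace, Matrix.mul_apply, Matrix.diag, sq]

lemma sqFrob_mul_orth_right {ι n : Type*} [Fintype ι] [Fintype n] [DecidableEq ι]
    [DecidableEq n] (A : Matrix ι n ℝ) (V : Matrix n n ℝ) (hV : V.transpose * V = 1) :
    sqFrob (A * V.transpose) = sqFrob A := by
  rw [sqFrob_eq_trace, sqFrob_eq_trace, Matrix.transpose_mul, Matrix.transpose_transpose]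
  rw [show A * V.transpose * (V * A.transpose) = A * (V.transpose * V) * A.transpose by
    simp only [Matrix.mul_assoc], hV, Matrix.mul_one]

lemma sqFrob_orth_mul_left {ι κ K : Type*} [Fintype ι] [Fintype κ] [Fintype K]
    [DecidableEq ι] [DecidableEq K]
    (U : Matrix ι K ℝ) (B : Matrix K κ ℝ) (hU : U.transpose * U = 1) :
    sqFrob (U * B) = sqFrob B := by
  rw [sqFrob_eq_trace, sqFrob_eq_trace, Matrix.transpose_mul]
  rw [show U * B * (B.transpose * U.transpose) = U * (B * B.transpose) * U.transpose by
    simp only [Matrix.mul_assoc]]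
  rw [Matrix.trace_mul_comm, show U.transpose * (U * (B * B.transpose)) =
    (U.transpose * U) * (B * B.transpose) by simp only [Matrix.mul_assoc], hU, Matrix.one_mul]

lemma sqFrob_mul_cols {ι K n : Type*} [Fintype ι] [Fintype K] [Fintype n]
    (M : Matrix ι K ℝ) (S : Matrix K n ℝ) :
    sqFrob (M * S) = ∑ j, sqNorm (M.mulVec (fun i => S i j)) := by
  rw [sqFrob, Finset.sum_comm]
  simp [sqNorm, Matrix.mul_apply, Matrix.mulVec, dotProduct]

theorem stmt1 {m K d n : ℕ} (Φ : Matrix (Fin m) (Fin K) ℝ) (Y : Matrix (Fin K) (Fin n) ℝ)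
    (X : Matrix (Fin d) (Fin n) ℝ) (δ : ℝ) (hδ0 : 0 < δ) (hδ1 : δ < 1)
    (What : Matrix (Fin m) (Fin d) ℝ) (Zhat : Matrix (Fin K) (Fin d) ℝ)
    (hW : ∀ W : Matrix (Fin m) (Fin d) ℝ,
      sqFrob (Φ * Y - What * X) ≤ sqFrob (Φ * Y - W * X))
    (hZ : ∀ Z : Matrix (Fin K) (Fin d) ℝ,
      sqFrob (Y - Zhat * X) ≤ sqFrob (Y - Z * X))
    (U : Matrix (Fin K) (Fin K) ℝ) (Sig : Matrix (Fin K) (Fin n) ℝ)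
    (V : Matrix (Fin n) (Fin n) ℝ)
    (hU : U.transpose * U = 1) (hV : V.transpose * V = 1)
    (hSVD : Y - Zhat * X = U * Sig * V.transpose)
    (hdiag : ∀ j, Sparse 1 (fun i => Sig i j))
    (hRIP : RIP 1 δ (Φ * U)) :
    sqFrob (Φ * Y - What * X) ≤ (1 + δ) * sqFrob (Y - Zhat * X) := by
  have h1 : sqFrob (Φ * Y - What * X) ≤ sqFrob (Φ * Y - (Φ * Zhat) * X) := hW (Φ * Zhat)
  have h2 : Φ * Y - (Φ * Zhat) * X = Φ * U * Sig * V.transpose := by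
    rw [show Φ * Y - Φ * Zhat * X = Φ * (Y - Zhat * X) by
      rw [Matrix.mul_sub, Matrix.mul_assoc], hSVD]
    simp only [Matrix.mul_assoc]
  have h3 : sqFrob (Φ * U * Sig * V.transpose) = sqFrob (Φ * U * Sig) :=
    sqFrob_mul_orth_right _ V hV
  have h4 : sqFrob (Φ * U * Sig) ≤ (1 + δ) * sqFrob Sig := by
    rw [show Φ * U * Sig = (Φ * U) * Sig from rfl, sqFrob_mul_cols]
    have : (1 + δ) * sqFrob Sig = ∑ j, (1 + δ) * sqNorm (fun i => Sig i j) := by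
      rw [← Finset.mul_sum, sqFrob, Finset.sum_comm]
      simp [sqNorm]
    rw [this]
    exact Finset.sum_le_sum fun j _ => (hRIP _ (hdiag j)).2
  have h5 : sqFrob (Y - Zhat * X) = sqFrob Sig := by
    rw [hSVD, sqFrob_mul_orth_right _ V hV, sqFrob_orth_mul_left U Sig hU]
  calc sqFrob (Φ * Y - What * X) ≤ sqFrob (Φ * Y - (Φ * Zhat) * X) := h1
    _ = sqFrob (Φ * U * Sig) := by rw [h2, h3]
    _ ≤ (1 + δ) * sqFrob Sig := h4
    _ = (1 + δ) * sqFrob (Y - Zhat * X) := by rw [h5]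
end

section
/- Consider the projected gradient descent iteration v^{(t+1)} = Π(v^{(t)} − η Φᵀ(Φ v^{(t)} − b)), where Π is the exact Euclidean projection onto a closed set S ⊆ {v : ‖v‖₀ ≤ s}, ŷ ∈ S, Φ is (3s,δ)-RIP, and η ∈ (1/(2−2δ), 1). Then for every t, ‖ŷ − v^{(t+1)}‖₂ ≤ (2 − 2η + 2ηδ)·‖ŷ − v^{(t)}‖₂ + 2η√(1+δ)·‖Φŷ − b‖₂. -/
/-!
Put `u = ŷ - v⁺`, `d = ŷ - v` and `r = Φŷ - b`. Comparing the projection `v⁺` with the competitor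
`ŷ ∈ S` gives `‖u‖² ≤ 2⟨d + ηΦᵀ(Φv - b), u⟩`, and since `Φv - b = r - Φd` the right side splits as
`2(1 - η)⟨u, d⟩ + 2η(⟨u, d⟩ - ⟨Φu, Φd⟩) + 2η⟨Φu, r⟩`. Both `u` and `d` are supported on the union of
three `s`-sparse supports, so RIP (polarised) bounds the middle term by `2ηδ‖u‖‖d‖`, Cauchy–Schwarz
the first by `2(1 - η)‖u‖‖d‖`, and RIP with Cauchy–Schwarz the last by `2η√(1 + δ)‖u‖‖r‖`.
Dividing by `‖u‖` gives the claim.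
-/

open Matrix BigOperators

section Norms

variable {ι : Type*} [Fintype ι]

lemma sqNorm_eq_dotProduct (v : ι → ℝ) : sqNorm v = v ⬝ᵥ v := by
  simp only [sqNorm, dotProduct, sq]

lemma sqNorm_nonneg (v : ι → ℝ) : 0 ≤ sqNorm v :=
  Finset.sum_nonneg fun _ _ => sq_nonneg _

lemma norm2_nonneg (v : ι → ℝ) : 0 ≤ norm2 v := Real.sqrt_nonneg _

lemma norm2_sq (v : ι → ℝ) : norm2 v ^ 2 = sqNorm v := Real.sq_sqrt (sqNorm_nonneg v)

lemma eq_zero_of_norm2_eq_zero {v : ι → ℝ} (h : norm2 v = 0) : v = 0 := by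
  rw [← dotProduct_self_eq_zero, ← sqNorm_eq_dotProduct, ← norm2_sq, h, sq, zero_mul]

lemma sqNorm_smul_add_smul (c e : ℝ) (x y : ι → ℝ) :
    sqNorm (c • x + e • y) = c ^ 2 * sqNorm x + 2 * (c * e) * (x ⬝ᵥ y) + e ^ 2 * sqNorm y := by
  simp only [sqNorm_eq_dotProduct, add_dotProduct, dotProduct_add, smul_dotProduct,
    dotProduct_smul, smul_eq_mul, dotProduct_comm y x]
  ring

lemma sqNorm_sub (x y : ι → ℝ) : sqNorm (x - y) = sqNorm x - 2 * (x ⬝ᵥ y) + sqNorm y := by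
  simp only [sqNorm_eq_dotProduct, sub_dotProduct, dotProduct_sub, dotProduct_comm y x]
  ring

lemma dotProduct_le_norm2_mul_norm2 (x y : ι → ℝ) : x ⬝ᵥ y ≤ norm2 x * norm2 y :=
  Real.sum_mul_le_sqrt_mul_sqrt Finset.univ x y

end Norms

section Sparsity

variable {K : ℕ}

lemma Sparse.of_support_subset {s : ℕ} {v : Fin K → ℝ} {T : Set (Fin K)} (hT : T.ncard ≤ s)
    (hv : Function.support v ⊆ T) : Sparse s v :=
  (Set.ncard_le_ncard hv).trans hT

lemma ncard_support_union_union_le {s : ℕ} {x y z : Fin K → ℝ}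
    (hx : Sparse s x) (hy : Sparse s y) (hz : Sparse s z) :
    (Function.support x ∪ Function.support y ∪ Function.support z).ncard ≤ 3 * s := by
  have hx' : (Function.support x).ncard ≤ s := hx
  have hy' : (Function.support y).ncard ≤ s := hy
  have hz' : (Function.support z).ncard ≤ s := hz
  have := Set.ncard_union_le (Function.support x ∪ Function.support y) (Function.support z)
  have := Set.ncard_union_le (Function.support x) (Function.support y)
  omega

lemma support_smul_add_smul_subset (c e : ℝ) {x y : Fin K → ℝ} {T : Set (Fin K)}
    (hx : Function.support x ⊆ T) (hy : Function.support y ⊆ T) :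
    Function.support (c • x + e • y) ⊆ T :=
  (Function.support_add _ _).trans <| Set.union_subset
    ((Function.support_const_smul_subset c x).trans hx)
    ((Function.support_const_smul_subset e y).trans hy)

end Sparsity

namespace RIP

variable {m K k : ℕ} {δ : ℝ} {Φ : Matrix (Fin m) (Fin K) ℝ}

lemma norm2_mulVec_le (hRIP : RIP k δ Φ) {v : Fin K → ℝ} (hv : Sparse k v) :
    norm2 (Φ *ᵥ v) ≤ √(1 + δ) * norm2 v := by
  rw [norm2, norm2, ← Real.sqrt_mul' _ (sqNorm_nonneg v)]
  exact Real.sqrt_le_sqrt (hRIP v hv).2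

/-- Polarisation with weights: RIP at `c • x + e • y` (lower) and `c • x - e • y` (upper). -/
lemma two_mul_mul_dotProduct_sub_le (hRIP : RIP k δ Φ) {x y : Fin K → ℝ} {T : Set (Fin K)}
    (hT : T.ncard ≤ k) (hx : Function.support x ⊆ T) (hy : Function.support y ⊆ T) (c e : ℝ) :
    2 * c * e * (x ⬝ᵥ y - (Φ *ᵥ x) ⬝ᵥ (Φ *ᵥ y)) ≤ δ * (c ^ 2 * sqNorm x + e ^ 2 * sqNorm y) := by
  have hplus := (hRIP _ (.of_support_subset hT (support_smul_add_smul_subset c e hx hy))).1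
  have hminus := (hRIP _ (.of_support_subset hT (support_smul_add_smul_subset c (-e) hx hy))).2
  simp only [mulVec_add, mulVec_smul, sqNorm_smul_add_smul, neg_sq] at hplus hminus
  linarith

lemma dotProduct_sub_le (hRIP : RIP k δ Φ) {x y : Fin K → ℝ} {T : Set (Fin K)}
    (hT : T.ncard ≤ k) (hx : Function.support x ⊆ T) (hy : Function.support y ⊆ T) :
    x ⬝ᵥ y - (Φ *ᵥ x) ⬝ᵥ (Φ *ᵥ y) ≤ δ * (norm2 x * norm2 y) := by
  rcases (norm2_nonneg x).eq_or_lt with hx0 | hxpos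
  · simp [eq_zero_of_norm2_eq_zero hx0.symm, norm2, sqNorm]
  rcases (norm2_nonneg y).eq_or_lt with hy0 | hypos
  · simp [eq_zero_of_norm2_eq_zero hy0.symm, norm2, sqNorm]
  have h := hRIP.two_mul_mul_dotProduct_sub_le hT hx hy (norm2 y) (norm2 x)
  rw [← norm2_sq x, ← norm2_sq y] at h
  have hxy : 0 < 2 * norm2 y * norm2 x := by positivity
  nlinarith

end RIP

lemma le_of_sq_le_mul {a b : ℝ} (hb : 0 ≤ b) (h : a ^ 2 ≤ a * b) : a ≤ b := by
  nlinarith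

lemma sqNorm_sub_le_of_projection {ι κ : Type*} [Fintype ι] [Fintype κ]
    (Φ : Matrix ι κ ℝ) (η : ℝ) (b : ι → ℝ) {y v p : κ → ℝ}
    (hproj : sqNorm (p - (v - η • Φᵀ *ᵥ (Φ *ᵥ v - b)))
      ≤ sqNorm (y - (v - η • Φᵀ *ᵥ (Φ *ᵥ v - b)))) :
    sqNorm (y - p) ≤ 2 * (1 - η) * ((y - p) ⬝ᵥ (y - v))
      + 2 * η * ((y - p) ⬝ᵥ (y - v) - (Φ *ᵥ (y - p)) ⬝ᵥ (Φ *ᵥ (y - v)))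
      + 2 * η * ((Φ *ᵥ (y - p)) ⬝ᵥ (Φ *ᵥ y - b)) := by
  set g := Φᵀ *ᵥ (Φ *ᵥ v - b)
  have hsplit : p - (v - η • g) = (y - (v - η • g)) - (y - p) := by abel
  have hgrad : g ⬝ᵥ (y - p) = (Φ *ᵥ (y - p)) ⬝ᵥ (Φ *ᵥ y - b) - (Φ *ᵥ (y - p)) ⬝ᵥ (Φ *ᵥ (y - v)) := by
    rw [dotProduct_comm, dotProduct_mulVec, vecMul_transpose, ← dotProduct_sub, mulVec_sub Φ y v]
    congr 1
    abel
  have hlin : (y - (v - η • g)) ⬝ᵥ (y - p) = (y - p) ⬝ᵥ (y - v) + η * (g ⬝ᵥ (y - p)) := by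
    rw [show y - (v - η • g) = (y - v) + η • g by abel, add_dotProduct, smul_dotProduct,
      smul_eq_mul, dotProduct_comm (y - v)]
  rw [hsplit, sqNorm_sub] at hproj
  rw [hlin, hgrad] at hproj
  linarith

theorem stmt4 {m K : ℕ} (Φ : Matrix (Fin m) (Fin K) ℝ) (s : ℕ) (δ η : ℝ)
    (hδ0 : 0 < δ) (hδ1 : δ < 1)
    (hRIP : RIP (3 * s) δ Φ)
    (hη1 : 1 / (2 - 2 * δ) < η) (hη2 : η < 1)
    (S : Set (Fin K → ℝ)) (hSsp : ∀ v ∈ S, Sparse s v)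
    (yhat : Fin K → ℝ) (hy : yhat ∈ S) (b : Fin m → ℝ)
    (vt vnext : Fin K → ℝ) (hvt : vt ∈ S) (hvnext : vnext ∈ S)
    (hproj : ∀ v ∈ S,
      sqNorm (vnext - (vt - η • Φ.transpose.mulVec (Φ.mulVec vt - b)))
        ≤ sqNorm (v - (vt - η • Φ.transpose.mulVec (Φ.mulVec vt - b)))) :
    norm2 (yhat - vnext)
      ≤ (2 - 2 * η + 2 * η * δ) * norm2 (yhat - vt)
        + 2 * η * Real.sqrt (1 + δ) * norm2 (Φ.mulVec yhat - b) := by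
  have hη0 : 0 < η := lt_trans (one_div_pos.mpr (by linarith)) hη1
  set T := Function.support yhat ∪ Function.support vt ∪ Function.support vnext
  have hT : T.ncard ≤ 3 * s :=
    ncard_support_union_union_le (hSsp _ hy) (hSsp _ hvt) (hSsp _ hvnext)
  have hu : Function.support (yhat - vnext) ⊆ T :=
    (Function.support_sub _ _).trans (Set.union_subset_union_left _ Set.subset_union_left)
  have hd : Function.support (yhat - vt) ⊆ T :=
    (Function.support_sub _ _).trans Set.subset_union_left
  have descent := sqNorm_sub_le_of_projection Φ η b (hproj yhat hy)
  have hcs := dotProduct_le_norm2_mul_norm2 (yhat - vnext) (yhat - vt)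
  have hrip := hRIP.dotProduct_sub_le hT hu hd
  have hres := (dotProduct_le_norm2_mul_norm2 (Φ *ᵥ (yhat - vnext)) (Φ *ᵥ yhat - b)).trans <|
    mul_le_mul_of_nonneg_right (hRIP.norm2_mulVec_le (.of_support_subset hT hu)) (norm2_nonneg _)
  rw [← norm2_sq] at descent
  refine le_of_sq_le_mul ?_ ?_
  · have hcoef : 0 ≤ 2 - 2 * η + 2 * η * δ := by nlinarith
    exact add_nonneg (mul_nonneg hcoef (norm2_nonneg _))
      (mul_nonneg (by positivity) (norm2_nonneg _))
  · linarith [mul_le_mul_of_nonneg_left hcs (by linarith : 0 ≤ 2 * (1 - η)),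
      mul_le_mul_of_nonneg_left hrip (by linarith : 0 ≤ 2 * η),
      mul_le_mul_of_nonneg_left hres (by linarith : 0 ≤ 2 * η)]
end

section
/- The projection of a vector w ∈ ℝ^K onto the set of nonnegative s-sparse vectors is obtained as follows: choose a set T of indices of the s largest values of wⱼ, and set vⱼ* = max(wⱼ, 0) for j ∈ T and vⱼ* = 0 otherwise. Then v* minimizes ‖v − w‖₂² over all vectors v with v ≥ 0 componentwise and ‖v‖₀ ≤ s. -/
open Matrix BigOperators

theorem stmt10 {K : ℕ} (w : Fin K → ℝ) (s : ℕ) (hs : 0 < s) (hsK : s ≤ K)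
    (T : Finset (Fin K)) (hTcard : T.card = s)
    (hmax : ∀ j ∈ T, ∀ k ∉ T, w k ≤ w j) :
    ∀ v : Fin K → ℝ, (∀ j, 0 ≤ v j) → Sparse s v →
      sqNorm ((fun j => if j ∈ T then max (w j) 0 else 0) - w) ≤ sqNorm (v - w) := by
  classical
  intro v hv hsp
  set S : Finset (Fin K) := Finset.univ.filter (fun j => v j ≠ 0) with hSdef
  have hScard : S.card ≤ s := by
    have h1 : Nat.card {i // v i ≠ 0} = S.card := by
      rw [Nat.card_eq_fintype_card, Fintype.card_subtype]
    rw [Sparse, h1] at hsp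
    exact hsp
  set p : Fin K → ℝ := fun j => max (w j) 0 ^ 2 with hpdef
  set m : Fin K → ℝ := fun j => min (w j) 0 ^ 2 with hmdef
  have hp0 : ∀ j, 0 ≤ p j := fun j => sq_nonneg _
  have hm_le : ∀ j, m j ≤ (v j - w j) ^ 2 := by
    intro j
    have := hv j
    rcases le_or_gt (w j) 0 with h | h
    · simp only [hmdef, min_eq_left h]; nlinarith
    · simp only [hmdef, min_eq_right h.le]; nlinarith [sq_nonneg (v j - w j)]
  have hmw : ∀ j, m j + p j = (w j) ^ 2 := by
    intro j
    rcases le_or_gt (w j) 0 with h | h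
    · simp [hmdef, hpdef, min_eq_left h, max_eq_right h]
    · simp [hmdef, hpdef, min_eq_right h.le, max_eq_left h.le]
  -- key inequality : ∑ over S of p ≤ ∑ over T of p
  have key : ∑ j ∈ S, p j ≤ ∑ j ∈ T, p j := by
    have hsplitS : ∑ j ∈ S ∩ T, p j + ∑ j ∈ S \ T, p j = ∑ j ∈ S, p j :=
      Finset.sum_inter_add_sum_sdiff S T p
    have hsplitT : ∑ j ∈ T ∩ S, p j + ∑ j ∈ T \ S, p j = ∑ j ∈ T, p j :=
      Finset.sum_inter_add_sum_sdiff T S p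
    have hinter : S ∩ T = T ∩ S := Finset.inter_comm S T
    have hcard : (S \ T).card ≤ (T \ S).card := by
      have h1 : (S ∩ T).card + (S \ T).card = S.card :=
        Finset.card_inter_add_card_sdiff S T
      have h2 : (T ∩ S).card + (T \ S).card = T.card :=
        Finset.card_inter_add_card_sdiff T S
      have h3 : (S ∩ T).card = (T ∩ S).card := by rw [hinter]
      omega
    have hdiff : ∑ j ∈ S \ T, p j ≤ ∑ j ∈ T \ S, p j := by
      rcases Finset.eq_empty_or_nonempty (T \ S) with he | hne
      · have : (S \ T) = ∅ := Finset.card_eq_zero.mp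
          (by rw [he, Finset.card_empty] at hcard; omega)
        simp [this, he]
      · obtain ⟨b, hb, hbmin⟩ := Finset.exists_min_image (T \ S) p hne
        have hbT : b ∈ T := (Finset.mem_sdiff.mp hb).1
        have h1 : ∑ j ∈ S \ T, p j ≤ (S \ T).card • p b := by
          apply Finset.sum_le_card_nsmul
          intro x hx
          have hxT : x ∉ T := (Finset.mem_sdiff.mp hx).2
          have hw : w x ≤ w b := hmax b hbT x hxT
          have : max (w x) 0 ≤ max (w b) 0 := max_le_max hw le_rfl
          simpa [hpdef] using pow_le_pow_left₀ (le_max_right _ _) this 2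
        have h2 : (T \ S).card • p b ≤ ∑ j ∈ T \ S, p j :=
          Finset.card_nsmul_le_sum _ _ _ hbmin
        have h3 : (S \ T).card • p b ≤ (T \ S).card • p b := by
          have := hp0 b
          simp only [nsmul_eq_mul]
          exact mul_le_mul_of_nonneg_right (Nat.cast_le.mpr hcard) this
        linarith
    calc ∑ j ∈ S, p j = ∑ j ∈ S ∩ T, p j + ∑ j ∈ S \ T, p j := hsplitS.symm
      _ ≤ ∑ j ∈ T ∩ S, p j + ∑ j ∈ T \ S, p j := by rw [hinter]; linarith
      _ = ∑ j ∈ T, p j := hsplitT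
  -- compute sqNorm of vstar - w
  have hstar : sqNorm ((fun j => if j ∈ T then max (w j) 0 else 0) - w)
      = (∑ j, (w j) ^ 2) - ∑ j ∈ T, p j := by
    have : ∀ j, ((if j ∈ T then max (w j) 0 else 0) - w j) ^ 2
        = (w j) ^ 2 - (if j ∈ T then p j else 0) := by
      intro j
      by_cases hj : j ∈ T
      · simp only [hj, if_true]
        have : (max (w j) 0 - w j) ^ 2 = m j := by
          rcases le_or_gt (w j) 0 with h | h
          · simp [hmdef, min_eq_left h, max_eq_right h]
          · simp [hmdef, min_eq_right h.le, max_eq_left h.le]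
        rw [this]
        have := hmw j; linarith
      · simp [hj]
    simp only [sqNorm, Pi.sub_apply]
    rw [Finset.sum_congr rfl (fun j _ => this j), Finset.sum_sub_distrib]
    congr 1
    rw [Finset.sum_ite_mem, Finset.univ_inter]
  -- lower bound sqNorm (v - w)
  have hlb : (∑ j, (w j) ^ 2) - ∑ j ∈ S, p j ≤ sqNorm (v - w) := by
    have : ∀ j, (w j) ^ 2 - (if j ∈ S then p j else 0) ≤ (v j - w j) ^ 2 := by
      intro j
      by_cases hj : j ∈ S
      · simp only [hj, if_true]
        have := hm_le j; have := hmw j; linarith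
      · have hv0 : v j = 0 := by
          by_contra h
          exact hj (Finset.mem_filter.mpr ⟨Finset.mem_univ _, h⟩)
        simp [hv0, hj]
    have hsum := Finset.sum_le_sum (fun j (_ : j ∈ Finset.univ) => this j)
    rw [Finset.sum_sub_distrib] at hsum
    simp only [sqNorm, Pi.sub_apply]
    rw [Finset.sum_ite_mem, Finset.univ_inter] at hsum
    exact hsum
  linarith [hstar, hlb, key]
end
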